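/- Let σ₁, σ₂ > 0, q > 0, t > 0. The two-phase density u(x,t) (equal to u₁ for x > q and u₂ for x < q as defined in the two-phase solution) is nonnegative for all x ∈ ℝ. -/
import Mathlib


open Real

noncomputable def twoPhase (σ₁ σ₂ q : ℝ) (x t : ℝ) : ℝ :=
  if x > q then
    (2 * σ₁ / (σ₁ + σ₂)) * (1 / (Real.sqrt (2 * π) * σ₁ * Real.sqrt t)) *
      Real.exp (-(x - (1 - σ₁ / σ₂) * q) ^ 2 / (2 * σ₁ ^ 2 * t))
  else
    (1 / (Real.sqrt (2 * π) * σ₂ * Real.sqrt t)) *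
      (Real.exp (-x ^ 2 / (2 * σ₂ ^ 2 * t)) +
        ((σ₂ - σ₁) / (σ₁ + σ₂)) * Real.exp (-(x - 2 * q) ^ 2 / (2 * σ₂ ^ 2 * t)))

theorem stmt9 (σ₁ σ₂ q t : ℝ) (hσ₁ : 0 < σ₁) (hσ₂ : 0 < σ₂) (hq : 0 < q) (ht : 0 < t) :
    ∀ x : ℝ, 0 ≤ twoPhase σ₁ σ₂ q x t := by
  intro x
  have hsum : 0 < σ₁ + σ₂ := by linarith
  have hsqt : 0 < Real.sqrt t := Real.sqrt_pos.mpr ht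
  have hs2π : 0 < Real.sqrt (2 * π) := Real.sqrt_pos.mpr (by positivity)
  unfold twoPhase
  split_ifs with h
  · positivity
  · push_neg at h
    have h1 : 0 < 1 / (Real.sqrt (2 * π) * σ₂ * Real.sqrt t) := by positivity
    refine mul_nonneg h1.le ?_
    set E1 := Real.exp (-x ^ 2 / (2 * σ₂ ^ 2 * t))
    set E2 := Real.exp (-(x - 2 * q) ^ 2 / (2 * σ₂ ^ 2 * t))
    set c := (σ₂ - σ₁) / (σ₁ + σ₂) with hc
    rcases le_or_gt 0 c with hc0 | hc0
    · have : 0 ≤ c * E2 := mul_nonneg hc0 (Real.exp_pos _).le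
      have : 0 < E1 := Real.exp_pos _
      nlinarith
    · have hE : E2 ≤ E1 := by
        apply Real.exp_le_exp.mpr
        apply div_le_div_of_nonneg_right ?_ (by positivity)
        nlinarith
      have h1c : 0 ≤ 1 + c := by
        have hle : (σ₁ - σ₂) / (σ₁ + σ₂) ≤ 1 := (div_le_one hsum).mpr (by linarith)
        have hcc : c = -((σ₁ - σ₂) / (σ₁ + σ₂)) := by rw [hc, ← neg_div]; ring_nf
        rw [hcc]; linarith
      have hE2 : 0 < E2 := Real.exp_pos _
      nlinarith
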